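/- arXiv:1905.04645 — 3 statements merged into one kernel-verified Lean document; each statement's English description precedes it below -/
import Mathlib

section
/- Let E1, E2 ∈ (M, c_k, n_k) be Moran sets, let U ⊆ ℝ² be an open set, and let f : U → ℝ be continuously differentiable on U. Suppose there exists a point (x0, y0) ∈ (E1 × E2) ∩ U with ∂_x f(x0, y0) ≠ 0 such that sup_{k≥1} (1 − c_k n_k) < |∂_y f(x0, y0) / ∂_x f(x0, y0)| < inf_{k≥1} ( c_k / (1 − n_k c_k) ). Then the set f_U(E1, E2) = { f(x, y) : (x, y) ∈ (E1 × E2) ∩ U } has nonempty interior in ℝ. -/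
/-!
Near `(x0, y0)` the map `f` is `ε`-close to its differential `L = (A, B)` on a small square, so it
is strictly monotone along horizontal lines (slope `≈ A`) and along vertical lines (slope `≈ B`).
If the level set `{f = t}` meets a product `I × J` of basic intervals of rank `k`, it can be
pushed into a product of children: a point `(x, y)` of it with `x` in a gap between children of
`I` (of length at most `(1 - c n) |I|`) is moved along the level set to a vertical side of the gap,
which is possible when `(|A| + ε) (1 - c n) |I| < (|B| - ε) |J|`; then `y` is moved in the same way
into a child of `J`, which needs `(|B| + ε) (1 - c n) |J| < (|A| - ε) c |I|`. For small `ε` these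
are exactly the two bounds on `|B / A|`. The nested products shrink to a point of `E₁ × E₂` on the
level set, so all values of `f` on the first product `I₀ × J₀`, which form a nondegenerate
interval, are values of `f` on `(E₁ × E₂) ∩ U`.
-/

open Set

/-- A word of rank `k`: the `j`-th letter is an element of `Fin (nseq j)`
(so there are `nseq j` choices for the letter at position `j`). -/
def MoranWord (nseq : ℕ → ℕ) (k : ℕ) : Type := ∀ j : Fin k, Fin (nseq j)

/-- A Moran structure on `[0,1]` with branching numbers `nseq` and contraction
ratios `cseq` (the index `k : ℕ` here corresponds to the index `k + 1` in the paper):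
a family of nondegenerate closed intervals `T k σ ⊆ [0,1]`, indexed by words, such
that the `nseq k` children of a rank-`k` interval are subintervals with pairwise
disjoint interiors, each of relative length `cseq k`, whose union has the same
convex hull as the parent. -/
structure MoranStructure (nseq : ℕ → ℕ) (cseq : ℕ → ℝ) where
  T : (k : ℕ) → MoranWord nseq k → Set ℝ
  root : T 0 (fun j => j.elim0) = Icc (0 : ℝ) 1
  isClosedInterval : ∀ (k : ℕ) (σ : MoranWord nseq k), ∃ x y : ℝ, x < y ∧ T k σ = Icc x y
  child_subset : ∀ (k : ℕ) (σ : MoranWord nseq k) (i : Fin (nseq k)),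
    T (k + 1) (Fin.snoc σ i) ⊆ T k σ
  disjoint_interiors : ∀ (k : ℕ) (σ : MoranWord nseq k) (i i' : Fin (nseq k)), i ≠ i' →
    interior (T (k + 1) (Fin.snoc σ i)) ∩ interior (T (k + 1) (Fin.snoc σ i')) = ∅
  ratio : ∀ (k : ℕ) (σ : MoranWord nseq k) (i : Fin (nseq k)),
    Metric.diam (T (k + 1) (Fin.snoc σ i)) = cseq k * Metric.diam (T k σ)
  hull : ∀ (k : ℕ) (σ : MoranWord nseq k),
    convexHull ℝ (⋃ i : Fin (nseq k), T (k + 1) (Fin.snoc σ i)) = T k σ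

/-- The union `E_k` of all basic intervals of rank `k`. -/
def MoranStructure.level {nseq : ℕ → ℕ} {cseq : ℕ → ℝ}
    (M : MoranStructure nseq cseq) (k : ℕ) : Set ℝ :=
  ⋃ σ : MoranWord nseq k, M.T k σ

/-- The Moran set `E = ⋂_{k ≥ 1} ⋃_{σ ∈ D_k} T_σ` associated with a Moran structure. -/
def MoranStructure.moranSet {nseq : ℕ → ℕ} {cseq : ℕ → ℝ}
    (M : MoranStructure nseq cseq) : Set ℝ :=
  ⋂ k : ℕ, M.level (k + 1)

/-- `Ĩ` for the rank-`k` basic interval `I = T k σ`: the union of its rank-`(k+1)` children. -/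
def MoranStructure.tilde {nseq : ℕ → ℕ} {cseq : ℕ → ℝ}
    (M : MoranStructure nseq cseq) (k : ℕ) (σ : MoranWord nseq k) : Set ℝ :=
  ⋃ i : Fin (nseq k), M.T (k + 1) (Fin.snoc σ i)

open Filter Topology MeasureTheory
open scoped NNReal

theorem exists_pos_margin {s i a b : ℝ} (hs : s * a < b) (hi : b < i * a) :
    ∃ ε > 0, s * (a + ε) + ε < b ∧ b + ε < i * (a - ε) := by
  have h1 : ∀ᶠ e in 𝓝 (0 : ℝ), s * (a + e) + e < b :=
    (show ContinuousAt (fun e : ℝ => s * (a + e) + e) 0 by fun_prop).eventually_lt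
      continuousAt_const (by simpa using hs)
  have h2 : ∀ᶠ e in 𝓝 (0 : ℝ), b + e < i * (a - e) :=
    (show ContinuousAt (fun e : ℝ => b + e) 0 by fun_prop).eventually_lt
      (show ContinuousAt (fun e : ℝ => i * (a - e)) 0 by fun_prop) (by simpa using hi)
  obtain ⟨δ, hδ, h⟩ := Metric.eventually_nhds_iff.1 (h1.and h2)
  exact ⟨δ / 2, half_pos hδ, h (by rw [Real.dist_0_eq_abs, abs_of_pos (half_pos hδ)]; linarith)⟩

theorem exists_level_margins {nseq : ℕ → ℕ} {cseq : ℕ → ℝ} (hc : ∀ k, 0 < cseq k)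
    (hcn : ∀ k, cseq k * (nseq k : ℝ) < 1) {a b : ℝ} (ha : 0 < a)
    (hlow : (⨆ k, (1 - cseq k * (nseq k : ℝ))) < b / a)
    (hhigh : b / a < ⨅ k, cseq k / (1 - (nseq k : ℝ) * cseq k)) :
    ∃ ε : ℝ≥0, 0 < ε ∧ ε < a ∧ ε < b ∧ ∀ k, (1 - cseq k * nseq k) * (a + ε) < b - ε ∧
      (b + ε) * (1 - cseq k * nseq k) < cseq k * (a - ε) := by
  set S := ⨆ k, (1 - cseq k * (nseq k : ℝ))
  set I := ⨅ k, cseq k / (1 - (nseq k : ℝ) * cseq k)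
  have hg (k : ℕ) : 0 < 1 - nseq k * cseq k := mul_comm (cseq k) (nseq k) ▸ sub_pos.2 (hcn k)
  have hquot (k : ℕ) : 0 ≤ cseq k / (1 - nseq k * cseq k) := div_nonneg (hc k).le (hg k).le
  have hgS (k : ℕ) : 1 - cseq k * nseq k ≤ S :=
    le_ciSup (f := fun k => 1 - cseq k * (nseq k : ℝ)) ⟨1, by
      rintro _ ⟨k, rfl⟩
      linarith [mul_nonneg (hc k).le (Nat.cast_nonneg (nseq k))]⟩ k
  have hIq (k : ℕ) : I * (1 - cseq k * nseq k) ≤ cseq k := by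
    rw [mul_comm (cseq k), ← le_div_iff₀ (hg k)]
    exact ciInf_le ⟨0, by rintro _ ⟨k, rfl⟩; exact hquot k⟩ k
  have hS : 0 ≤ S := (sub_pos.2 (hcn 0)).le.trans (hgS 0)
  have hI : 0 ≤ I := le_ciInf hquot
  obtain ⟨ε, hε, h1, h2⟩ := exists_pos_margin ((lt_div_iff₀ ha).1 hlow) ((div_lt_iff₀ ha).1 hhigh)
  have hεa : ε < a := by nlinarith
  have hεb : ε < b := by nlinarith
  lift ε to ℝ≥0 using hε.le
  refine ⟨ε, mod_cast hε, hεa, hεb, fun k => ⟨?_, ?_⟩⟩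
  · nlinarith [mul_le_mul_of_nonneg_right (hgS k) (by linarith : 0 ≤ a + ε)]
  · have hgk : 0 < 1 - cseq k * nseq k := sub_pos.2 (hcn k)
    nlinarith [mul_lt_mul_of_pos_right h2 hgk,
      mul_le_mul_of_nonneg_right (hIq k) (sub_nonneg.2 hεa.le)]

theorem exists_prod_range_lt {c : ℕ → ℝ} {q ρ : ℝ} (hc : ∀ k, 0 ≤ c k) (hcq : ∀ k, c k ≤ q)
    (hq : q < 1) (hρ : 0 < ρ) : ∃ k, ∏ j ∈ Finset.range k, c j < ρ := by
  obtain ⟨k, hk⟩ := exists_pow_lt_of_lt_one hρ hq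
  refine ⟨k, lt_of_le_of_lt ?_ hk⟩
  simpa using Finset.prod_le_prod (fun j _ => hc j) (fun j _ => hcq j) (s := Finset.range k)

theorem IsPreconnected.nonempty_interior_of_ne {s : Set ℝ} (hs : IsPreconnected s) {a b : ℝ}
    (ha : a ∈ s) (hb : b ∈ s) (hab : a ≠ b) : (interior s).Nonempty := by
  wlog h : a < b generalizing a b
  · exact this hb ha hab.symm (hab.lt_or_gt.resolve_left h)
  exact (nonempty_Ioo.2 h).mono (interior_Icc (a := a) ▸ interior_mono (hs.Icc_subset ha hb))

theorem IsCompact.exists_gap {C : Set ℝ} (hC : IsCompact C) {z : ℝ} (hz : z ∈ convexHull ℝ C) :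
    ∃ α ∈ C, ∃ β ∈ C, α ≤ z ∧ z ≤ β ∧ Disjoint (Ioo α β) C := by
  have hle : (C ∩ Iic z).Nonempty := by
    by_contra! h
    have : C ⊆ Ioi z := fun w hw => show z < w from not_le.1 fun hwz => h.subset ⟨hw, hwz⟩
    exact lt_irrefl z (convexHull_min this (convex_Ioi z) hz)
  have hge : (C ∩ Ici z).Nonempty := by
    by_contra! h
    have : C ⊆ Iio z := fun w hw => show w < z from not_le.1 fun hwz => h.subset ⟨hw, hwz⟩
    exact lt_irrefl z (convexHull_min this (convex_Iio z) hz)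
  have hCle : IsCompact (C ∩ Iic z) := hC.inter_right isClosed_Iic
  have hCge : IsCompact (C ∩ Ici z) := hC.inter_right isClosed_Ici
  obtain ⟨hαC, hαz⟩ := hCle.sSup_mem hle
  obtain ⟨hβC, hzβ⟩ := hCge.sInf_mem hge
  refine ⟨_, hαC, _, hβC, hαz, hzβ, disjoint_left.2 fun w hw hwC => ?_⟩
  rcases le_total w z with hwz | hzw
  · exact (le_csSup hCle.bddAbove ⟨hwC, hwz⟩).not_gt hw.1
  · exact (csInf_le hCge.bddBelow ⟨hwC, hzw⟩).not_gt hw.2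

theorem Convex.aedisjoint_of_disjoint_interior {E : Type*} [NormedAddCommGroup E]
    [NormedSpace ℝ E] [MeasurableSpace E] [BorelSpace E] [FiniteDimensional ℝ E]
    (μ : Measure E) [μ.IsAddHaarMeasure] {s t : Set E} (hs : Convex ℝ s) (ht : Convex ℝ t)
    (h : Disjoint (interior s) (interior t)) : AEDisjoint μ s t :=
  h.aedisjoint.congr (interior_ae_eq_of_null_frontier (hs.addHaar_frontier μ)).symm
    (interior_ae_eq_of_null_frontier (ht.addHaar_frontier μ)).symm

namespace ApproximatesLinearOn

variable {f : ℝ × ℝ → ℝ} {L : ℝ × ℝ →L[ℝ] ℝ} {ε : ℝ≥0} {s t : Set ℝ} {a b α β x y : ℝ}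

theorem abs_sub_sub_le_fst (hf : ApproximatesLinearOn f L (s ×ˢ t) ε) {u v γ : ℝ}
    (hu : u ∈ s) (hv : v ∈ s) (hγ : γ ∈ t) :
    |f (v, γ) - f (u, γ) - L (1, 0) * (v - u)| ≤ ε * |v - u| := by
  have h := hf (v, γ) ⟨hv, hγ⟩ (u, γ) ⟨hu, hγ⟩
  have hvec : ((v, γ) - (u, γ) : ℝ × ℝ) = (v - u) • ((1 : ℝ), (0 : ℝ)) := by simp
  rwa [hvec, map_smul, smul_eq_mul, mul_comm, norm_smul, Real.norm_eq_abs, Real.norm_eq_abs,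
    Prod.norm_def, norm_one, norm_zero, max_eq_left zero_le_one, mul_one] at h

theorem abs_sub_sub_le_snd (hf : ApproximatesLinearOn f L (s ×ˢ t) ε) {u v γ : ℝ}
    (hγ : γ ∈ s) (hu : u ∈ t) (hv : v ∈ t) :
    |f (γ, v) - f (γ, u) - L (0, 1) * (v - u)| ≤ ε * |v - u| := by
  have h := hf (γ, v) ⟨hγ, hv⟩ (γ, u) ⟨hγ, hu⟩
  have hvec : ((γ, v) - (γ, u) : ℝ × ℝ) = (v - u) • ((0 : ℝ), (1 : ℝ)) := by simp
  rwa [hvec, map_smul, smul_eq_mul, mul_comm, norm_smul, Real.norm_eq_abs, Real.norm_eq_abs,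
    Prod.norm_def, norm_one, norm_zero, max_eq_right zero_le_one, mul_one] at h

theorem comp_swap (hf : ApproximatesLinearOn f L (s ×ˢ t) ε) :
    ApproximatesLinearOn (f ∘ Prod.swap)
      (L.comp (ContinuousLinearEquiv.prodComm ℝ ℝ ℝ : ℝ × ℝ →L[ℝ] ℝ × ℝ)) (t ×ˢ s) ε := by
  intro p hp q hq
  have h := hf p.swap ⟨hp.2, hp.1⟩ q.swap ⟨hq.2, hq.1⟩
  simpa [Prod.norm_def, max_comm] using h

theorem exists_mem_Icc_eq_fst (hf : ApproximatesLinearOn f L (Icc a b ×ˢ t) ε)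
    (hx : x ∈ Icc a b) {γ c : ℝ} (hγ : γ ∈ t) (hlo : (ε - L (1, 0)) * (b - x) ≤ f (x, γ) - c)
    (hhi : f (x, γ) - c ≤ (L (1, 0) - ε) * (x - a)) : ∃ x' ∈ Icc a b, f (x', γ) = c := by
  have hab : a ≤ b := hx.1.trans hx.2
  have ha := hf.abs_sub_sub_le_fst hx (left_mem_Icc.2 hab) hγ
  have hb := hf.abs_sub_sub_le_fst hx (right_mem_Icc.2 hab) hγ
  rw [abs_of_nonpos (sub_nonpos.2 hx.1)] at ha
  rw [abs_of_nonneg (sub_nonneg.2 hx.2)] at hb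
  rw [abs_le] at ha hb
  have hcont : ContinuousOn (fun u => f (u, γ)) (Icc a b) :=
    hf.continuousOn.comp (by fun_prop) fun u hu => ⟨hu, hγ⟩
  exact intermediate_value_Icc hab hcont ⟨by linarith, by linarith⟩

/-- Along the vertical segment through `(x, y)` the values `f - f (x, y)` at the two ends have
opposite signs; since `f` is strictly monotone along horizontal lines, one of the two horizontal
sides of the rectangle still meets the level set of `f (x, y)`. -/
theorem exists_crossing_fst (hf : ApproximatesLinearOn f L (Icc a b ×ˢ Icc α β) ε)
    (hB : ε ≤ |L (0, 1)|) (hx : x ∈ Icc a b) (hy : y ∈ Icc α β)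
    (hsize : (|L (0, 1)| + ε) * (β - α) < (|L (1, 0)| - ε) * (b - a)) :
    ∃ x' ∈ Icc a b, f (x', α) = f (x, y) ∨ f (x', β) = f (x, y) := by
  wlog hA : 0 ≤ L (1, 0) generalizing f L
  · have hneg : ApproximatesLinearOn (-f) (-L) (Icc a b ×ˢ Icc α β) ε := fun p hp q hq => by
      have h := hf p hp q hq
      rwa [← norm_neg, show -(f p - f q - L (p - q)) = (-f) p - (-f) q - (-L) (p - q) by
        simp only [Pi.neg_apply, neg_apply]; ring] at h
    obtain ⟨x', hx', h⟩ := this hneg (by simpa using hB) (by simpa using hsize)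
      (by rw [neg_apply]; linarith)
    exact ⟨x', hx', by simpa using h⟩
  rw [abs_of_nonneg hA] at hsize
  have hab : 0 ≤ b - a := by linarith [hx.1, hx.2]
  have hm : 0 ≤ L (1, 0) - ε := by
    by_contra! h
    nlinarith [hy.1.trans hy.2, abs_nonneg (L (0, 1))]
  have hα := hf.abs_sub_sub_le_snd hx hy (left_mem_Icc.2 (hy.1.trans hy.2))
  have hβ := hf.abs_sub_sub_le_snd hx hy (right_mem_Icc.2 (hy.1.trans hy.2))
  rw [abs_of_nonpos (sub_nonpos.2 hy.1), abs_le] at hα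
  rw [abs_of_nonneg (sub_nonneg.2 hy.2), abs_le] at hβ
  have hxa : 0 ≤ x - a := sub_nonneg.2 hx.1
  have hbx : 0 ≤ b - x := sub_nonneg.2 hx.2
  have hyα : 0 ≤ y - α := sub_nonneg.2 hy.1
  have hβy : 0 ≤ β - y := sub_nonneg.2 hy.2
  have hlineα := hf.exists_mem_Icc_eq_fst hx (c := f (x, y)) (left_mem_Icc.2 (hy.1.trans hy.2))
  have hlineβ := hf.exists_mem_Icc_eq_fst hx (c := f (x, y)) (right_mem_Icc.2 (hy.1.trans hy.2))
  rcases le_total 0 (L (0, 1)) with hB0 | hB0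
  · rw [abs_of_nonneg hB0] at hB hsize
    by_cases hd : f (x, β) - f (x, y) ≤ (L (1, 0) - ε) * (x - a)
    · obtain ⟨x', hx', h⟩ := hlineβ (by nlinarith) hd
      exact ⟨x', hx', Or.inr h⟩
    · obtain ⟨x', hx', h⟩ := hlineα (by nlinarith) (by nlinarith)
      exact ⟨x', hx', Or.inl h⟩
  · rw [abs_of_nonpos hB0] at hB hsize
    by_cases hd : f (x, α) - f (x, y) ≤ (L (1, 0) - ε) * (x - a)
    · obtain ⟨x', hx', h⟩ := hlineα (by nlinarith) hd
      exact ⟨x', hx', Or.inl h⟩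
    · obtain ⟨x', hx', h⟩ := hlineβ (by nlinarith) (by nlinarith)
      exact ⟨x', hx', Or.inr h⟩

theorem exists_crossing_snd (hf : ApproximatesLinearOn f L (Icc α β ×ˢ Icc a b) ε)
    (hA : ε ≤ |L (1, 0)|) (hx : x ∈ Icc α β) (hy : y ∈ Icc a b)
    (hsize : (|L (1, 0)| + ε) * (β - α) < (|L (0, 1)| - ε) * (b - a)) :
    ∃ y' ∈ Icc a b, f (α, y') = f (x, y) ∨ f (β, y') = f (x, y) := by
  simpa using hf.comp_swap.exists_crossing_fst (by simpa using hA) hy hx (by simpa using hsize)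

theorem nonempty_interior_image (hf : ApproximatesLinearOn f L (s ×ˢ t) ε)
    (hs : IsPreconnected s) (ht : IsPreconnected t) (hA : ε < |L (1, 0)|) {u v γ : ℝ}
    (hu : u ∈ s) (hv : v ∈ s) (huv : u ≠ v) (hγ : γ ∈ t) : (interior (f '' (s ×ˢ t))).Nonempty := by
  refine ((hs.prod ht).image f hf.continuousOn).nonempty_interior_of_ne
    (mem_image_of_mem f (show (u, γ) ∈ s ×ˢ t from ⟨hu, hγ⟩))
    (mem_image_of_mem f (show (v, γ) ∈ s ×ˢ t from ⟨hv, hγ⟩)) fun heq => ?_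
  have h := hf.abs_sub_sub_le_fst hu hv hγ
  rw [heq, sub_self, zero_sub, abs_neg, abs_mul] at h
  have := abs_pos.2 (sub_ne_zero.2 huv.symm)
  nlinarith

end ApproximatesLinearOn

instance (nseq : ℕ → ℕ) (k : ℕ) : Finite (MoranWord nseq k) :=
  inferInstanceAs (Finite (∀ j : Fin k, Fin (nseq j)))

theorem MoranWord.exists_eq_snoc {nseq : ℕ → ℕ} {k : ℕ} (σ : MoranWord nseq (k + 1)) :
    ∃ (τ : MoranWord nseq k) (i : Fin (nseq k)), σ = Fin.snoc τ i :=
  ⟨fun j => σ j.castSucc, σ (Fin.last k),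
    (Fin.snoc_init_self (α := fun j : Fin (k + 1) => Fin (nseq j)) σ).symm⟩

namespace MoranStructure

variable {nseq : ℕ → ℕ} {cseq : ℕ → ℝ} (M : MoranStructure nseq cseq)

theorem diam_T (k : ℕ) (σ : MoranWord nseq k) :
    Metric.diam (M.T k σ) = ∏ j ∈ Finset.range k, cseq j := by
  induction k with
  | zero =>
    rw [show σ = (fun j => j.elim0) from funext fun j => j.elim0, M.root,
      Real.diam_Icc zero_le_one]
    simp
  | succ k ih =>
    obtain ⟨τ, i, rfl⟩ := σ.exists_eq_snoc
    rw [M.ratio, ih, Finset.prod_range_succ, mul_comm]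

theorem exists_T_eq_Icc (k : ℕ) (σ : MoranWord nseq k) :
    ∃ u v, u < v ∧ v - u = ∏ j ∈ Finset.range k, cseq j ∧ M.T k σ = Icc u v := by
  obtain ⟨u, v, huv, hT⟩ := M.isClosedInterval k σ
  exact ⟨u, v, huv, by rw [← M.diam_T k σ, hT, Real.diam_Icc huv.le], hT⟩

variable {M}

theorem isCompact_T (k : ℕ) (σ : MoranWord nseq k) : IsCompact (M.T k σ) := by
  obtain ⟨u, v, -, hT⟩ := M.isClosedInterval k σ
  exact hT ▸ isCompact_Icc

theorem ordConnected_T (k : ℕ) (σ : MoranWord nseq k) : (M.T k σ).OrdConnected := by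
  obtain ⟨u, v, -, hT⟩ := M.isClosedInterval k σ
  exact hT ▸ ordConnected_Icc

theorem T_subset_closedBall {k : ℕ} {σ : MoranWord nseq k} {z : ℝ} (hz : z ∈ M.T k σ) :
    M.T k σ ⊆ Metric.closedBall z (∏ j ∈ Finset.range k, cseq j) := fun _ hw =>
  M.diam_T k σ ▸ Metric.dist_le_diam_of_mem (isCompact_T k σ).isBounded hw hz

theorem tilde_subset (k : ℕ) (σ : MoranWord nseq k) : M.tilde k σ ⊆ M.T k σ :=
  iUnion_subset (M.child_subset k σ)

theorem isCompact_tilde (k : ℕ) (σ : MoranWord nseq k) : IsCompact (M.tilde k σ) :=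
  isCompact_iUnion fun _ => isCompact_T _ _

theorem volume_tilde {k : ℕ} (σ : MoranWord nseq k) :
    volume (M.tilde k σ) =
      ENNReal.ofReal (nseq k * (cseq k * ∏ j ∈ Finset.range k, cseq j)) := by
  have hchild (i : Fin (nseq k)) : volume (M.T (k + 1) (Fin.snoc σ i)) =
      ENNReal.ofReal (cseq k * ∏ j ∈ Finset.range k, cseq j) := by
    obtain ⟨u, v, -, hL, hT⟩ := M.exists_T_eq_Icc (k + 1) (Fin.snoc σ i)
    rw [hT, Real.volume_Icc, hL, Finset.prod_range_succ, mul_comm]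
  have hconvex (i : Fin (nseq k)) : Convex ℝ (M.T (k + 1) (Fin.snoc σ i)) :=
    (ordConnected_T _ _).convex
  rw [tilde, measure_iUnion₀ (fun i j hij => (hconvex i).aedisjoint_of_disjoint_interior volume
      (hconvex j) (disjoint_iff_inter_eq_empty.2 (M.disjoint_interiors k σ i j hij)))
      (fun i => (isCompact_T _ _).isClosed.measurableSet.nullMeasurableSet),
    tsum_fintype, Finset.sum_congr rfl fun i _ => hchild i, Finset.sum_const, Finset.card_univ,
    Fintype.card_fin, nsmul_eq_mul, ENNReal.ofReal_mul (Nat.cast_nonneg _), ENNReal.ofReal_natCast]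

/-- The children of a basic interval cover all of it except gaps of total length
`(1 - c n) |I|`, so each gap is at most that long. -/
theorem exists_gap {k : ℕ} {σ : MoranWord nseq k} (hc : 0 ≤ cseq k) {z : ℝ}
    (hz : z ∈ M.T k σ) : ∃ α ∈ M.tilde k σ, ∃ β ∈ M.tilde k σ, α ≤ z ∧ z ≤ β ∧
      β - α ≤ (1 - cseq k * nseq k) * ∏ j ∈ Finset.range k, cseq j := by
  rw [← M.hull k σ] at hz
  obtain ⟨α, hα, β, hβ, hαz, hzβ, hdisj⟩ := (isCompact_tilde k σ).exists_gap hz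
  refine ⟨α, hα, β, hβ, hαz, hzβ, ?_⟩
  have hsub : Ioo α β ∪ M.tilde k σ ⊆ M.T k σ :=
    union_subset (Ioo_subset_Icc_self.trans ((ordConnected_T k σ).out
      (tilde_subset k σ hα) (tilde_subset k σ hβ))) (tilde_subset k σ)
  have hvol := measure_mono (μ := volume) hsub
  obtain ⟨u, v, huv, hL, hT⟩ := M.exists_T_eq_Icc k σ
  have hprod : 0 ≤ nseq k * (cseq k * ∏ j ∈ Finset.range k, cseq j) :=
    mul_nonneg (Nat.cast_nonneg _) (mul_nonneg hc (hL ▸ sub_nonneg.2 huv.le))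
  rw [measure_union hdisj (isCompact_tilde k σ).isClosed.measurableSet, Real.volume_Ioo,
    volume_tilde σ, hT, Real.volume_Icc, ← ENNReal.ofReal_add (by linarith) hprod,
    ENNReal.ofReal_le_ofReal_iff (by linarith), hL] at hvol
  linarith

theorem level_succ_subset (k : ℕ) : M.level (k + 1) ⊆ M.level k := by
  refine iUnion_subset fun σ => ?_
  obtain ⟨τ, i, rfl⟩ := σ.exists_eq_snoc
  exact (M.child_subset k _ _).trans (subset_iUnion (M.T k) _)

theorem antitone_level : Antitone M.level :=
  antitone_nat_of_succ_le level_succ_subset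

theorem isClosed_level (k : ℕ) : IsClosed (M.level k) :=
  isClosed_iUnion_of_finite fun σ => (isCompact_T k σ).isClosed

theorem moranSet_subset_level (k : ℕ) : M.moranSet ⊆ M.level k :=
  (iInter_subset _ k).trans (antitone_level k.le_succ)

theorem exists_prod_T_subset_closedBall (M1 M2 : MoranStructure nseq cseq)
    (hc : ∀ k, 0 ≤ cseq k) {q : ℝ} (hcq : ∀ k, cseq k ≤ q) (hq : q < 1) {x y ρ : ℝ}
    (hx : x ∈ M1.moranSet) (hy : y ∈ M2.moranSet) (hρ : 0 < ρ) :
    ∃ (k : ℕ) (σ τ : MoranWord nseq k), x ∈ M1.T k σ ∧ y ∈ M2.T k τ ∧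
      M1.T k σ ×ˢ M2.T k τ ⊆ Metric.closedBall (x, y) ρ := by
  obtain ⟨k, hk⟩ := exists_prod_range_lt hc hcq hq hρ
  obtain ⟨σ, hσ⟩ := mem_iUnion.1 (moranSet_subset_level k hx)
  obtain ⟨τ, hτ⟩ := mem_iUnion.1 (moranSet_subset_level k hy)
  refine ⟨k, σ, τ, hσ, hτ, closedBall_prod_same x y ρ ▸ prod_mono ?_ ?_⟩
  · exact (T_subset_closedBall hσ).trans (Metric.closedBall_subset_closedBall hk.le)
  · exact (T_subset_closedBall hτ).trans (Metric.closedBall_subset_closedBall hk.le)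

variable {f : ℝ × ℝ → ℝ} {L : ℝ × ℝ →L[ℝ] ℝ} {ε : ℝ≥0}

theorem exists_child_fst (M : MoranStructure nseq cseq) {k : ℕ} {σ : MoranWord nseq k}
    {a b x y : ℝ} (hc : 0 ≤ cseq k) (hf : ApproximatesLinearOn f L (M.T k σ ×ˢ Icc a b) ε)
    (hA : ε ≤ |L (1, 0)|)
    (hsize : (|L (1, 0)| + ε) * ((1 - cseq k * nseq k) * ∏ j ∈ Finset.range k, cseq j) <
      (|L (0, 1)| - ε) * (b - a))
    (hx : x ∈ M.T k σ) (hy : y ∈ Icc a b) :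
    ∃ i, f (x, y) ∈ f '' (M.T (k + 1) (Fin.snoc σ i) ×ˢ Icc a b) := by
  obtain ⟨α, hα, β, hβ, hαx, hxβ, hgap⟩ := M.exists_gap hc hx
  have hsub : Icc α β ⊆ M.T k σ :=
    (ordConnected_T k σ).out (tilde_subset k σ hα) (tilde_subset k σ hβ)
  obtain ⟨y', hy', h | h⟩ := (hf.mono_set (prod_mono hsub subset_rfl)).exists_crossing_snd hA
    ⟨hαx, hxβ⟩ hy (hsize.trans_le' (mul_le_mul_of_nonneg_left hgap (by positivity)))
  · obtain ⟨i, hi⟩ := mem_iUnion.1 hα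
    exact ⟨i, (α, y'), ⟨hi, hy'⟩, h⟩
  · obtain ⟨i, hi⟩ := mem_iUnion.1 hβ
    exact ⟨i, (β, y'), ⟨hi, hy'⟩, h⟩

theorem exists_child_snd (M : MoranStructure nseq cseq) {k : ℕ} {τ : MoranWord nseq k}
    {a b x y : ℝ} (hc : 0 ≤ cseq k) (hf : ApproximatesLinearOn f L (Icc a b ×ˢ M.T k τ) ε)
    (hB : ε ≤ |L (0, 1)|)
    (hsize : (|L (0, 1)| + ε) * ((1 - cseq k * nseq k) * ∏ j ∈ Finset.range k, cseq j) <
      (|L (1, 0)| - ε) * (b - a))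
    (hx : x ∈ Icc a b) (hy : y ∈ M.T k τ) :
    ∃ j, f (x, y) ∈ f '' (Icc a b ×ˢ M.T (k + 1) (Fin.snoc τ j)) := by
  obtain ⟨α, hα, β, hβ, hαy, hyβ, hgap⟩ := M.exists_gap hc hy
  have hsub : Icc α β ⊆ M.T k τ :=
    (ordConnected_T k τ).out (tilde_subset k τ hα) (tilde_subset k τ hβ)
  obtain ⟨x', hx', h | h⟩ := (hf.mono_set (prod_mono subset_rfl hsub)).exists_crossing_fst hB
    hx ⟨hαy, hyβ⟩ (hsize.trans_le' (mul_le_mul_of_nonneg_left hgap (by positivity)))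
  · obtain ⟨j, hj⟩ := mem_iUnion.1 hα
    exact ⟨j, (x', α), ⟨hx', hj⟩, h⟩
  · obtain ⟨j, hj⟩ := mem_iUnion.1 hβ
    exact ⟨j, (x', β), ⟨hx', hj⟩, h⟩

theorem exists_children_mem_image (M1 M2 : MoranStructure nseq cseq) {k : ℕ}
    {σ τ : MoranWord nseq k} (hc : 0 ≤ cseq k)
    (hf : ApproximatesLinearOn f L (M1.T k σ ×ˢ M2.T k τ) ε)
    (hA : ε ≤ |L (1, 0)|) (hB : ε ≤ |L (0, 1)|)
    (hfst : (1 - cseq k * nseq k) * (|L (1, 0)| + ε) < |L (0, 1)| - ε)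
    (hsnd : (|L (0, 1)| + ε) * (1 - cseq k * nseq k) < cseq k * (|L (1, 0)| - ε))
    {t : ℝ} (ht : t ∈ f '' (M1.T k σ ×ˢ M2.T k τ)) :
    ∃ i j, t ∈ f '' (M1.T (k + 1) (Fin.snoc σ i) ×ˢ M2.T (k + 1) (Fin.snoc τ j)) := by
  obtain ⟨⟨x, y⟩, ⟨hx, hy⟩, rfl⟩ := ht
  obtain ⟨u, v, huv, hL, hT⟩ := M2.exists_T_eq_Icc k τ
  have hLpos : 0 < ∏ j ∈ Finset.range k, cseq j := hL ▸ sub_pos.2 huv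
  obtain ⟨i, ⟨x', y'⟩, ⟨hx', hy'⟩, hxy'⟩ := M1.exists_child_fst hc (hT ▸ hf) hA
    (by rw [hL]; nlinarith) hx (hT ▸ hy)
  obtain ⟨a, b, -, hL', hT'⟩ := M1.exists_T_eq_Icc (k + 1) (Fin.snoc σ i)
  obtain ⟨j, hj⟩ := M2.exists_child_snd hc
    (hf.mono_set (prod_mono (hT' ▸ M1.child_subset k σ i) subset_rfl)) hB
    (by rw [hL', Finset.prod_range_succ]; nlinarith) (hT' ▸ hx') (hT ▸ hy')
  exact ⟨i, j, hT' ▸ hxy' ▸ hj⟩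

theorem mem_image_moranSet_prod (M1 M2 : MoranStructure nseq cseq) {K : Set (ℝ × ℝ)}
    (hK : IsCompact K) (hf : ApproximatesLinearOn f L K ε) (hc : ∀ k, 0 ≤ cseq k)
    (hA : ε ≤ |L (1, 0)|) (hB : ε ≤ |L (0, 1)|)
    (hfst : ∀ k, (1 - cseq k * nseq k) * (|L (1, 0)| + ε) < |L (0, 1)| - ε)
    (hsnd : ∀ k, (|L (0, 1)| + ε) * (1 - cseq k * nseq k) < cseq k * (|L (1, 0)| - ε))
    {k₀ : ℕ} {σ₀ τ₀ : MoranWord nseq k₀} (hR : M1.T k₀ σ₀ ×ˢ M2.T k₀ τ₀ ⊆ K) {t : ℝ}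
    (ht : t ∈ f '' (M1.T k₀ σ₀ ×ˢ M2.T k₀ τ₀)) :
    t ∈ f '' ((M1.moranSet ×ˢ M2.moranSet) ∩ K) := by
  have hgood : ∀ k, k₀ ≤ k → ∃ σ τ : MoranWord nseq k,
      M1.T k σ ×ˢ M2.T k τ ⊆ K ∧ t ∈ f '' (M1.T k σ ×ˢ M2.T k τ) := by
    intro k hk
    induction k, hk using Nat.le_induction with
    | base => exact ⟨σ₀, τ₀, hR, ht⟩
    | succ k _ ih =>
      obtain ⟨σ, τ, hsub, hmem⟩ := ih
      obtain ⟨i, j, hij⟩ := exists_children_mem_image M1 M2 (hc k) (hf.mono_set hsub) hA hB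
        (hfst k) (hsnd k) hmem
      exact ⟨_, _, (prod_mono (M1.child_subset k σ i) (M2.child_subset k τ j)).trans hsub, hij⟩
  set Z : ℕ → Set (ℝ × ℝ) := fun m => (K ∩ f ⁻¹' {t}) ∩ M1.level (k₀ + m) ×ˢ M2.level (k₀ + m)
  have hZclosed (m : ℕ) : IsClosed (Z m) :=
    (hf.continuousOn.preimage_isClosed_of_isClosed hK.isClosed isClosed_singleton).inter
      ((isClosed_level _).prod (isClosed_level _))
  have hZne (m : ℕ) : (Z m).Nonempty := by
    obtain ⟨σ, τ, hsub, p, hp, hpt⟩ := hgood (k₀ + m) (Nat.le_add_right _ _)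
    exact ⟨p, ⟨hsub hp, hpt⟩, mem_iUnion_of_mem σ hp.1, mem_iUnion_of_mem τ hp.2⟩
  have hZanti (m : ℕ) : Z (m + 1) ⊆ Z m :=
    inter_subset_inter_right _ (prod_mono (level_succ_subset _) (level_succ_subset _))
  obtain ⟨p, hp⟩ := IsCompact.nonempty_iInter_of_sequence_nonempty_isCompact_isClosed Z hZanti
    hZne (hK.of_isClosed_subset (hZclosed 0) fun _ h => h.1.1) hZclosed
  have hpZ (m : ℕ) : p ∈ Z m := mem_iInter.1 hp m
  refine ⟨p, ⟨⟨mem_iInter.2 fun k => ?_, mem_iInter.2 fun k => ?_⟩, (hpZ 0).1.1⟩, (hpZ 0).1.2⟩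
  · exact antitone_level (by omega : k + 1 ≤ k₀ + (k + 1)) (hpZ (k + 1)).2.1
  · exact antitone_level (by omega : k + 1 ≤ k₀ + (k + 1)) (hpZ (k + 1)).2.2

end MoranStructure

/-- **Theorem 1.1.** Let `E1, E2 ∈ (M, c_k, n_k)` be Moran sets, `U ⊆ ℝ²`
open, `f` continuously differentiable on `U`.  If there is `(x0, y0) ∈ (E1 × E2) ∩ U`
with `∂ₓf(x0,y0) ≠ 0` and
`sup_k (1 - c_k n_k) < |∂_y f(x0,y0) / ∂_x f(x0,y0)| < inf_k (c_k / (1 - n_k c_k))`,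
then `f_U(E1, E2)` has nonempty interior. -/
theorem moran_image_nonempty_interior
    (nseq : ℕ → ℕ) (cseq : ℕ → ℝ)
    (hn : ∀ k, 2 ≤ nseq k) (hc : ∀ k, 0 < cseq k)
    (hcn : ∀ k, cseq k * (nseq k : ℝ) < 1)
    (M1 M2 : MoranStructure nseq cseq)
    (U : Set (ℝ × ℝ)) (hU : IsOpen U)
    (f : ℝ × ℝ → ℝ) (hf : ContDiffOn ℝ 1 f U)
    (x0 y0 : ℝ)
    (hmem : (x0, y0) ∈ (M1.moranSet ×ˢ M2.moranSet) ∩ U)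
    (hdx : fderiv ℝ f (x0, y0) (1, 0) ≠ 0)
    (hlow : (⨆ k, (1 - cseq k * (nseq k : ℝ))) <
      |fderiv ℝ f (x0, y0) (0, 1) / fderiv ℝ f (x0, y0) (1, 0)|)
    (hhigh : |fderiv ℝ f (x0, y0) (0, 1) / fderiv ℝ f (x0, y0) (1, 0)| <
      ⨅ k, cseq k / (1 - (nseq k : ℝ) * cseq k)) :
    (interior (f '' ((M1.moranSet ×ˢ M2.moranSet) ∩ U))).Nonempty := by
  obtain ⟨⟨hx0, hy0⟩, hU0⟩ := hmem
  rw [abs_div] at hlow hhigh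
  obtain ⟨ε, hε, hA, hB, hmargin⟩ := exists_level_margins hc hcn (abs_pos.2 hdx) hlow hhigh
  obtain ⟨s, hs, hfs⟩ := ((hf.contDiffAt (hU.mem_nhds hU0)).hasStrictFDerivAt
    one_ne_zero).approximates_deriv_on_nhds (Or.inr hε)
  obtain ⟨ρ, hρ, hρs⟩ := Metric.nhds_basis_closedBall.mem_iff.1 (inter_mem hs (hU.mem_nhds hU0))
  have hhalf (k : ℕ) : cseq k ≤ 1 / 2 := by
    have : (2 : ℝ) ≤ nseq k := by exact_mod_cast hn k
    nlinarith [hc k, hcn k]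
  obtain ⟨k₀, σ₀, τ₀, -, hτ₀, hR⟩ := M1.exists_prod_T_subset_closedBall M2 (fun k => (hc k).le)
    hhalf (by norm_num) hx0 hy0 hρ
  have hfK := hfs.mono_set (hρs.trans inter_subset_left)
  obtain ⟨u, v, huv, -, hT⟩ := M1.exists_T_eq_Icc k₀ σ₀
  refine ((hfK.mono_set hR).nonempty_interior_image
    (MoranStructure.ordConnected_T k₀ σ₀).isPreconnected
    (MoranStructure.ordConnected_T k₀ τ₀).isPreconnected hA (hT ▸ left_mem_Icc.2 huv.le)
    (hT ▸ right_mem_Icc.2 huv.le) huv.ne hτ₀).mono (interior_mono ?_)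
  rintro _ ⟨p, hp, rfl⟩
  exact image_mono (inter_subset_inter_right _ (hρs.trans inter_subset_right))
    (M1.mem_image_moranSet_prod M2 (isCompact_closedBall _ _) hfK (fun k => (hc k).le) hA.le hB.le
      (fun k => (hmargin k).1) (fun k => (hmargin k).2) hR (mem_image_of_mem f hp))
end

section
/- Let U ⊆ ℝ² be open and let f : U → ℝ be continuously differentiable with ∂_x f > 0 and ∂_y f > 0 on a closed square I × J ⊆ U, where I = [a, a+t] and J = [b, b+t] with t > 0. Fix an integer n ≥ 2 and a real c with 0 < cn < 1, and suppose that for every (x, y) ∈ I × J one has ∂_y f(x, y) / ∂_x f(x, y) < c / (1 − n c). Let J_1, …, J_n be closed subintervals of J, each of length c·t, with pairwise disjoint interiors, whose union J̃ has convex hull equal to J, and let I' ⊆ I be a closed subinterval of length c·t. Then ⋃_{j=1}^{n} f(I' × J_j) is a (connected) interval, equal to f(I' × J̃) and to the interval [ f(min I', b), f(max I', b+t) ]. -/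
/-!
Since `∂ₓ f, ∂_y f > 0`, `f` is monotone for the product order on the square, so it maps each
rectangle `I' × J_j` onto the interval between the images of its lower-left and upper-right
corners. The `n` intervals `J_j` fill a length `n c t` of `J`, so the gap between consecutive ones
is at most `(1 - n c) t`; by the ratio bound and the mean value theorem, moving right by `c t`
gains more than moving down by `(1 - n c) t` loses, so consecutive image intervals overlap.
Starting with the `J_j` that begins at `b`, they chain up to `f (max I', b + t)`.
-/

open Set Function MeasureTheory

theorem Convex.exists_sub_eq_fderiv_coords {s : Set (ℝ × ℝ)} (hs : Convex ℝ s) {f : ℝ × ℝ → ℝ}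
    (hf : ∀ z ∈ s, DifferentiableAt ℝ f z) {p q : ℝ × ℝ} (hp : p ∈ s) (hq : q ∈ s) :
    ∃ z ∈ s, f q - f p =
      (q.1 - p.1) * fderiv ℝ f z (1, 0) + (q.2 - p.2) * fderiv ℝ f z (0, 1) := by
  obtain ⟨z, hz, hfz⟩ :=
    domain_mvt (fun z hz => (hf z hz).hasFDerivAt.hasFDerivWithinAt) hs hp hq
  have hqp : q - p = (q.1 - p.1) • ((1 : ℝ), (0 : ℝ)) + (q.2 - p.2) • ((0 : ℝ), (1 : ℝ)) := by
    ext <;> simp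
  refine ⟨z, hs.segment_subset hp hq hz, ?_⟩
  rw [hfz, hqp, map_add, map_smul, map_smul, smul_eq_mul, smul_eq_mul]

theorem Convex.monotoneOn_of_fderiv_coords_nonneg {s : Set (ℝ × ℝ)} (hs : Convex ℝ s)
    {f : ℝ × ℝ → ℝ} (hf : ∀ z ∈ s, DifferentiableAt ℝ f z)
    (hfx : ∀ z ∈ s, 0 ≤ fderiv ℝ f z (1, 0)) (hfy : ∀ z ∈ s, 0 ≤ fderiv ℝ f z (0, 1)) :
    MonotoneOn f s := by
  intro p hp q hq hpq
  obtain ⟨z, hz, hfz⟩ := hs.exists_sub_eq_fderiv_coords hf hp hq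
  have h₁ := mul_nonneg (sub_nonneg.2 hpq.1) (hfx z hz)
  have h₂ := mul_nonneg (sub_nonneg.2 hpq.2) (hfy z hz)
  linarith

theorem Convex.le_of_fderiv_coords_div_lt {s : Set (ℝ × ℝ)} (hs : Convex ℝ s)
    {f : ℝ × ℝ → ℝ} (hf : ∀ z ∈ s, DifferentiableAt ℝ f z) {h g : ℝ} (hg : 0 < g)
    (hfx : ∀ z ∈ s, 0 < fderiv ℝ f z (1, 0)) (hfy : ∀ z ∈ s, 0 ≤ fderiv ℝ f z (0, 1))
    (hratio : ∀ z ∈ s, fderiv ℝ f z (0, 1) / fderiv ℝ f z (1, 0) < h / g)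
    {p q : ℝ × ℝ} (hp : p ∈ s) (hq : q ∈ s) (h₁ : q.1 - p.1 = h) (h₂ : p.2 - q.2 ≤ g) :
    f p ≤ f q := by
  obtain ⟨z, hz, hfz⟩ := hs.exists_sub_eq_fderiv_coords hf hp hq
  have hlt := (div_lt_div_iff₀ (hfx z hz) hg).1 (hratio z hz)
  rw [h₁] at hfz
  nlinarith [mul_le_mul_of_nonneg_left h₂ (hfy z hz)]

theorem image_Icc_eq_Icc_of_monotoneOn {α β : Type*} [TopologicalSpace α] [Preorder α]
    [TopologicalSpace β] [LinearOrder β] [OrderClosedTopology β] {f : α → β} {p q : α}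
    (hpq : p ≤ q) (hconn : IsPreconnected (Icc p q)) (hmono : MonotoneOn f (Icc p q))
    (hcont : ContinuousOn f (Icc p q)) : f '' Icc p q = Icc (f p) (f q) := by
  refine subset_antisymm ?_ ((hconn.image f hcont).Icc_subset ?_ ?_)
  · rintro _ ⟨x, hx, rfl⟩
    exact ⟨hmono (left_mem_Icc.2 hpq) hx hx.1, hmono hx (right_mem_Icc.2 hpq) hx.2⟩
  · exact mem_image_of_mem f (left_mem_Icc.2 hpq)
  · exact mem_image_of_mem f (right_mem_Icc.2 hpq)

theorem image_Icc_prod_Icc_eq_Icc_of_monotoneOn {f : ℝ × ℝ → ℝ} {x₁ x₂ y₁ y₂ : ℝ}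
    (hx : x₁ ≤ x₂) (hy : y₁ ≤ y₂) (hmono : MonotoneOn f (Icc x₁ x₂ ×ˢ Icc y₁ y₂))
    (hcont : ContinuousOn f (Icc x₁ x₂ ×ˢ Icc y₁ y₂)) :
    f '' (Icc x₁ x₂ ×ˢ Icc y₁ y₂) = Icc (f (x₁, y₁)) (f (x₂, y₂)) := by
  rw [Icc_prod_Icc] at *
  exact image_Icc_eq_Icc_of_monotoneOn ⟨hx, hy⟩ (convex_Icc _ _).isPreconnected hmono hcont

theorem Icc_subset_iUnion_Icc_of_exists_next {ι α β : Type*} [Fintype ι] [LinearOrder α]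
    [LinearOrder β] {l : ι → β} {u v : ι → α} {lo hi : α} (hlo : ∃ j, u j ≤ lo)
    (hnext : ∀ j, v j < hi → ∃ k, l j < l k ∧ u k ≤ v j) :
    Icc lo hi ⊆ ⋃ j, Icc (u j) (v j) := by
  rintro z ⟨hloz, hzhi⟩
  obtain ⟨j₀, hj₀⟩ := hlo
  obtain ⟨j, hj, hmax⟩ := Finset.exists_max_image {k | u k ≤ z} l
    ⟨j₀, Finset.mem_filter.2 ⟨Finset.mem_univ _, hj₀.trans hloz⟩⟩
  refine mem_iUnion.2 ⟨j, (Finset.mem_filter.1 hj).2, not_lt.1 fun hvz => ?_⟩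
  obtain ⟨k, hjk, hk⟩ := hnext j (hvz.trans_le hzhi)
  exact (hjk.trans_le (hmax k (Finset.mem_filter.2 ⟨Finset.mem_univ _, hk.trans hvz.le⟩))).false

section IntervalFamily

variable {ι : Type*} {l : ι → ℝ} {δ b e : ℝ}

theorem card_mul_ofReal_le_volume [Fintype ι]
    (hdisj : Pairwise (Disjoint on fun j => Ioo (l j) (l j + δ))) {s : Set ℝ}
    (hs : ⋃ j, Ioo (l j) (l j + δ) ⊆ s) :
    Fintype.card ι * ENNReal.ofReal δ ≤ volume s :=
  calc Fintype.card ι * ENNReal.ofReal δ = volume (⋃ j, Ioo (l j) (l j + δ)) := by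
        simp [measure_iUnion hdisj fun _ => measurableSet_Ioo, Real.volume_Ioo]
    _ ≤ volume s := measure_mono hs

theorem exists_eq_left_of_convexHull_iUnion_Icc_eq (hδ : 0 ≤ δ)
    (hsub : ∀ j, Icc (l j) (l j + δ) ⊆ Icc b e)
    (hhull : convexHull ℝ (⋃ j, Icc (l j) (l j + δ)) = Icc b e) (hbe : b ≤ e) :
    ∃ j, l j = b := by
  obtain ⟨y, hy, hyb⟩ := (concaveOn_id convex_univ).exists_le_of_mem_convexHull
    (subset_univ _) (hhull ▸ left_mem_Icc.2 hbe)
  obtain ⟨j, hj⟩ := mem_iUnion.1 hy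
  exact ⟨j, le_antisymm (hj.1.trans hyb) (hsub j (left_mem_Icc.2 (by linarith))).1⟩

theorem exists_le_right_of_convexHull_iUnion_Icc_eq
    (hhull : convexHull ℝ (⋃ j, Icc (l j) (l j + δ)) = Icc b e) (hbe : b ≤ e) :
    ∃ j, e ≤ l j + δ := by
  obtain ⟨y, hy, hey⟩ := (convexOn_id convex_univ).exists_ge_of_mem_convexHull
    (subset_univ _) (hhull ▸ right_mem_Icc.2 hbe)
  obtain ⟨j, hj⟩ := mem_iUnion.1 hy
  exact ⟨j, le_trans hey hj.2⟩

/-- The interval `k` following `j` leaves all the others inside `[b, l j + δ] ∪ [l k, e]`. -/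
theorem exists_next_sub_le_of_convexHull_iUnion_Icc_eq [Fintype ι] (hδ : 0 ≤ δ)
    (hsub : ∀ j, Icc (l j) (l j + δ) ⊆ Icc b e)
    (hdisj : Pairwise (Disjoint on fun j => Ioo (l j) (l j + δ)))
    (hhull : convexHull ℝ (⋃ j, Icc (l j) (l j + δ)) = Icc b e) {j : ι} (hj : l j + δ < e) :
    ∃ k, l j < l k ∧ l k - (l j + δ) ≤ e - b - Fintype.card ι * δ := by
  have hb : ∀ k, b ≤ l k := fun k => (hsub k (left_mem_Icc.2 (by linarith))).1
  have he : ∀ k, l k + δ ≤ e := fun k => (hsub k (right_mem_Icc.2 (by linarith))).2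
  obtain ⟨k, hk⟩ := exists_le_right_of_convexHull_iUnion_Icc_eq hhull (by linarith [hb j])
  obtain ⟨k₁, hk₁, hmin⟩ := Finset.exists_min_image {k | l j < l k} l
    ⟨k, Finset.mem_filter.2 ⟨Finset.mem_univ _, by linarith⟩⟩
  replace hk₁ : l j < l k₁ := (Finset.mem_filter.1 hk₁).2
  have hcover : ⋃ i, Ioo (l i) (l i + δ) ⊆ Icc b (l j + δ) ∪ Icc (l k₁) e := by
    refine iUnion_subset fun i y hy => ?_
    rcases le_or_gt (l i) (l j) with hij | hji
    · exact Or.inl ⟨(hb i).trans hy.1.le, hy.2.le.trans (by linarith)⟩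
    · exact Or.inr ⟨(hmin i (Finset.mem_filter.2 ⟨Finset.mem_univ _, hji⟩)).trans hy.1.le,
        hy.2.le.trans (he i)⟩
  have hvol : ENNReal.ofReal (Fintype.card ι * δ) ≤
      ENNReal.ofReal ((l j + δ - b) + (e - l k₁)) :=
    calc ENNReal.ofReal (Fintype.card ι * δ) = Fintype.card ι * ENNReal.ofReal δ := by
          rw [ENNReal.ofReal_mul (Nat.cast_nonneg _), ENNReal.ofReal_natCast]
      _ ≤ volume (Icc b (l j + δ) ∪ Icc (l k₁) e) := card_mul_ofReal_le_volume hdisj hcover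
      _ ≤ volume (Icc b (l j + δ)) + volume (Icc (l k₁) e) := measure_union_le _ _
      _ = _ := by
          rw [Real.volume_Icc, Real.volume_Icc,
            ENNReal.ofReal_add (by linarith [hb j]) (by linarith [he k₁])]
  have := (ENNReal.ofReal_le_ofReal_iff (by linarith [hb j, he k₁])).1 hvol
  exact ⟨k₁, hk₁, by linarith⟩

end IntervalFamily

theorem union_image_subrectangles_eq_interval_general
    (U : Set (ℝ × ℝ)) (hU : IsOpen U)
    (f : ℝ × ℝ → ℝ) (hf : ContDiffOn ℝ 1 f U)
    (a b t : ℝ) (ht : 0 < t)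
    (hIJU : Icc a (a + t) ×ˢ Icc b (b + t) ⊆ U)
    (hdx : ∀ p ∈ Icc a (a + t) ×ˢ Icc b (b + t), 0 < fderiv ℝ f p (1, 0))
    (hdy : ∀ p ∈ Icc a (a + t) ×ˢ Icc b (b + t), 0 < fderiv ℝ f p (0, 1))
    (n : ℕ) (c : ℝ) (hc : 0 < c) (hcn : c * (n : ℝ) < 1)
    (hratio : ∀ p ∈ Icc a (a + t) ×ˢ Icc b (b + t),
      fderiv ℝ f p (0, 1) / fderiv ℝ f p (1, 0) < c / (1 - (n : ℝ) * c))
    (l : Fin n → ℝ)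
    (hJsub : ∀ j, Icc (l j) (l j + c * t) ⊆ Icc b (b + t))
    (hJdisj : ∀ j j', j ≠ j' →
      interior (Icc (l j) (l j + c * t)) ∩ interior (Icc (l j') (l j' + c * t)) = ∅)
    (hJhull : convexHull ℝ (⋃ j, Icc (l j) (l j + c * t)) = Icc b (b + t))
    (a' : ℝ) (hI' : Icc a' (a' + c * t) ⊆ Icc a (a + t)) :
    (⋃ j, f '' (Icc a' (a' + c * t) ×ˢ Icc (l j) (l j + c * t))) =
        f '' (Icc a' (a' + c * t) ×ˢ ⋃ j, Icc (l j) (l j + c * t)) ∧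
      (⋃ j, f '' (Icc a' (a' + c * t) ×ˢ Icc (l j) (l j + c * t))) =
        Icc (f (a', b)) (f (a' + c * t, b + t)) := by
  set R := Icc a (a + t) ×ˢ Icc b (b + t)
  have hδ : 0 ≤ c * t := by positivity
  have hlen : ∀ x, x ≤ x + c * t := fun x => le_add_of_nonneg_right hδ
  have hR : Convex ℝ R := (convex_Icc _ _).prod (convex_Icc _ _)
  have hdiff : ∀ p ∈ R, DifferentiableAt ℝ f p := fun p hp =>
    (hf.differentiableOn one_ne_zero).differentiableAt (hU.mem_nhds (hIJU hp))
  have hmono : MonotoneOn f R := hR.monotoneOn_of_fderiv_coords_nonneg hdiff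
    (fun p hp => (hdx p hp).le) (fun p hp => (hdy p hp).le)
  have himage : ∀ {y₁ y₂}, y₁ ≤ y₂ → Icc y₁ y₂ ⊆ Icc b (b + t) →
      f '' (Icc a' (a' + c * t) ×ˢ Icc y₁ y₂) = Icc (f (a', y₁)) (f (a' + c * t, y₂)) :=
    fun hy hsub => image_Icc_prod_Icc_eq_Icc_of_monotoneOn (hlen a') hy
      (hmono.mono (prod_mono hI' hsub)) (hf.continuousOn.mono ((prod_mono hI' hsub).trans hIJU))
  have hdisj : Pairwise (Disjoint on fun j => Ioo (l j) (l j + c * t)) := fun j k hjk => by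
    simpa [disjoint_iff_inter_eq_empty] using hJdisj j k hjk
  have hnext : ∀ j, f (a' + c * t, l j + c * t) < f (a' + c * t, b + t) →
      ∃ k, l j < l k ∧ f (a', l k) ≤ f (a' + c * t, l j + c * t) := by
    intro j hj
    have hlt : l j + c * t < b + t :=
      (hJsub j (right_mem_Icc.2 (hlen _))).2.lt_of_ne fun h => by simp [h] at hj
    obtain ⟨k, hjk, hgap⟩ :=
      exists_next_sub_le_of_convexHull_iUnion_Icc_eq hδ hJsub hdisj hJhull hlt
    rw [Fintype.card_fin] at hgap
    have hp : (a', l k) ∈ R := ⟨hI' (left_mem_Icc.2 (hlen _)), hJsub k (left_mem_Icc.2 (hlen _))⟩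
    have hq : (a' + c * t, l j + c * t) ∈ R :=
      ⟨hI' (right_mem_Icc.2 (hlen _)), hJsub j (right_mem_Icc.2 (hlen _))⟩
    have hratio' : ∀ p ∈ R,
        fderiv ℝ f p (0, 1) / fderiv ℝ f p (1, 0) < c * t / ((1 - n * c) * t) := by
      simpa only [mul_div_mul_right _ _ ht.ne'] using hratio
    exact ⟨k, hjk, hR.le_of_fderiv_coords_div_lt hdiff (by nlinarith) hdx
      (fun p hp => (hdy p hp).le) hratio' hp hq (by simp) (by linarith)⟩
  obtain ⟨j₀, hj₀⟩ := exists_eq_left_of_convexHull_iUnion_Icc_eq hδ hJsub hJhull (by linarith)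
  refine ⟨by rw [prod_iUnion, image_iUnion], subset_antisymm ?_ ?_⟩
  · rw [← himage (by linarith) subset_rfl]
    exact iUnion_subset fun j => image_mono (prod_mono subset_rfl (hJsub j))
  · rw [iUnion_congr fun j => himage (hlen _) (hJsub j)]
    exact Icc_subset_iUnion_Icc_of_exists_next ⟨j₀, by rw [hj₀]⟩ hnext

/-- first intermediate claim in the proof of Lemma 2.2.
Let `f` be continuously differentiable on the open set `U ⊆ ℝ²` with `∂ₓ f > 0` and
`∂_y f > 0` on a closed square `I × J ⊆ U`, `I = [a, a+t]`, `J = [b, b+t]`, `t > 0`.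
Fix `n ≥ 2` and `0 < cn < 1`, and suppose `∂_y f / ∂ₓ f < c / (1 - nc)` on `I × J`.
If `J_1, …, J_n ⊆ J` are closed intervals of length `c·t` with pairwise disjoint
interiors whose union `J̃` has convex hull `J`, and `I' = [a', a' + c·t] ⊆ I`, then
`⋃_j f(I' × J_j)` is the interval `f(I' × J̃) = [f(min I', b), f(max I', b+t)]`. -/
theorem union_image_subrectangles_eq_interval
    (U : Set (ℝ × ℝ)) (hU : IsOpen U)
    (f : ℝ × ℝ → ℝ) (hf : ContDiffOn ℝ 1 f U)
    (a b t : ℝ) (ht : 0 < t)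
    (hIJU : Icc a (a + t) ×ˢ Icc b (b + t) ⊆ U)
    (hdx : ∀ p ∈ Icc a (a + t) ×ˢ Icc b (b + t), 0 < fderiv ℝ f p (1, 0))
    (hdy : ∀ p ∈ Icc a (a + t) ×ˢ Icc b (b + t), 0 < fderiv ℝ f p (0, 1))
    (n : ℕ) (hn : 2 ≤ n) (c : ℝ) (hc : 0 < c) (hcn : c * (n : ℝ) < 1)
    (hratio : ∀ p ∈ Icc a (a + t) ×ˢ Icc b (b + t),
      fderiv ℝ f p (0, 1) / fderiv ℝ f p (1, 0) < c / (1 - (n : ℝ) * c))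
    (l : Fin n → ℝ)
    (hJsub : ∀ j, Icc (l j) (l j + c * t) ⊆ Icc b (b + t))
    (hJdisj : ∀ j j', j ≠ j' →
      interior (Icc (l j) (l j + c * t)) ∩ interior (Icc (l j') (l j' + c * t)) = ∅)
    (hJhull : convexHull ℝ (⋃ j, Icc (l j) (l j + c * t)) = Icc b (b + t))
    (a' : ℝ) (hI' : Icc a' (a' + c * t) ⊆ Icc a (a + t)) :
    (⋃ j, f '' (Icc a' (a' + c * t) ×ˢ Icc (l j) (l j + c * t))) =
        f '' (Icc a' (a' + c * t) ×ˢ ⋃ j, Icc (l j) (l j + c * t)) ∧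
      (⋃ j, f '' (Icc a' (a' + c * t) ×ˢ Icc (l j) (l j + c * t))) =
        Icc (f (a', b)) (f (a' + c * t, b + t)) :=
  union_image_subrectangles_eq_interval_general U hU f hf a b t ht hIJU hdx hdy n c hc hcn hratio l
    hJsub hJdisj hJhull a' hI'
end

section
/- Let U ⊆ ℝ² be open and let f : U → ℝ be continuously differentiable with ∂_x f > 0 and ∂_y f > 0 on a closed square I × J ⊆ U, where I = [a, a+t] and J = [b, b+t] with t > 0. Fix an integer n ≥ 2 and a real c with 0 < cn < 1, and suppose that for every (x, y) ∈ I × J one has 1 − cn < ∂_y f(x, y) / ∂_x f(x, y) < c / (1 − n c). Let I_1, …, I_n (resp. J_1, …, J_n) be closed subintervals of I (resp. J), each of length c·t, with pairwise disjoint interiors, whose union Ĩ (resp. J̃) has convex hull equal to I (resp. J). Then ⋃_{i=1}^{n} ⋃_{j=1}^{n} f(I_i × J_j) = f(Ĩ × J̃) is a (connected) interval, equal to f(I × J) = [ f(a, b), f(a+t, b+t) ]. -/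
/-!
Sort each family of subintervals. Disjoint interiors separate consecutive intervals and the convex
hull condition puts the first and last ones at the ends of the side, so every gap between
consecutive intervals is at most `t - n c t = (1 - n c) t`.

Since both partial derivatives are positive, `f` is monotone on the square for the product order,
and the image of every rectangle is the interval between the values at its lower-left and
upper-right corners. Visit the subsquares column by column. Going up a column, the mean value
theorem and `∂_y f / ∂_x f < c / (1 - n c)` show that moving right by `c t` gains more than moving
down by at most `(1 - n c) t` loses, so the image of the next subsquare starts below the end of the
current one. Going from the top of one column to the bottom of the next, `1 - c n < ∂_y f / ∂_x f`
shows in the same way that moving up by `t` outweighs moving left by at most `(1 - n c) t`. A chain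
of intervals each of which starts below the end of the previous one covers the interval from the
first start to the last end, which here is `[f (a, b), f (a + t, b + t)]`.
-/

open Set

lemma Convex.le_of_fderiv_apply_sub_nonneg {E : Type*} [NormedAddCommGroup E]
    [NormedSpace ℝ E] {f : E → ℝ} {K : Set E} (hK : Convex ℝ K)
    (hf : ∀ p ∈ K, DifferentiableAt ℝ f p) {x y : E} (hx : x ∈ K) (hy : y ∈ K)
    (h : ∀ p ∈ K, 0 ≤ fderiv ℝ f p (y - x)) : f x ≤ f y := by
  obtain ⟨z, hz, hfxy⟩ :=
    domain_mvt (fun p hp => (hf p hp).hasFDerivAt.hasFDerivWithinAt) hK hx hy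
  linarith [h z (hK.segment_subset hx hy hz)]

lemma Convex.le_of_mul_fderiv_le {E : Type*} [NormedAddCommGroup E] [NormedSpace ℝ E]
    {f : E → ℝ} {K : Set E} (hK : Convex ℝ K) (hf : ∀ p ∈ K, DifferentiableAt ℝ f p)
    {u v : E} {θ : ℝ} (hu : ∀ p ∈ K, 0 ≤ fderiv ℝ f p u)
    (hθ : ∀ p ∈ K, θ * fderiv ℝ f p u ≤ fderiv ℝ f p v)
    {x y : E} (hx : x ∈ K) (hy : y ∈ K) {g h : ℝ} (hyx : y - x = h • v - g • u)
    (hh : 0 ≤ h) (hg : g ≤ θ * h) : f x ≤ f y := by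
  refine hK.le_of_fderiv_apply_sub_nonneg hf hx hy fun p hp => ?_
  rw [hyx, map_sub, map_smul, map_smul, smul_eq_mul, smul_eq_mul]
  nlinarith [mul_le_mul_of_nonneg_left (hθ p hp) hh, mul_le_mul_of_nonneg_right hg (hu p hp)]

lemma Convex.monotoneOn_of_fderiv_nonneg {f : ℝ × ℝ → ℝ} {K : Set (ℝ × ℝ)} (hK : Convex ℝ K)
    (hf : ∀ p ∈ K, DifferentiableAt ℝ f p) (hfx : ∀ p ∈ K, 0 ≤ fderiv ℝ f p (1, 0))
    (hfy : ∀ p ∈ K, 0 ≤ fderiv ℝ f p (0, 1)) : MonotoneOn f K := by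
  intro x hx y hy hxy
  refine hK.le_of_fderiv_apply_sub_nonneg hf hx hy fun p hp => ?_
  have hyx : y - x = (y.1 - x.1) • ((1 : ℝ), (0 : ℝ)) + (y.2 - x.2) • ((0 : ℝ), (1 : ℝ)) := by
    ext <;> simp
  rw [hyx, map_add, map_smul, map_smul, smul_eq_mul, smul_eq_mul]
  exact add_nonneg (mul_nonneg (sub_nonneg.2 hxy.1) (hfx p hp))
    (mul_nonneg (sub_nonneg.2 hxy.2) (hfy p hp))

lemma MonotoneOn.image_Icc_eq {α β : Type*} [TopologicalSpace α] [Preorder α] [LinearOrder β]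
    [TopologicalSpace β] [OrderClosedTopology β] {f : α → β} {x y : α}
    (hf : MonotoneOn f (Icc x y)) (hcont : ContinuousOn f (Icc x y))
    (hpc : IsPreconnected (Icc x y)) (hxy : x ≤ y) : f '' Icc x y = Icc (f x) (f y) :=
  hf.image_Icc_subset.antisymm <| (hpc.image f hcont).Icc_subset
    (mem_image_of_mem f (left_mem_Icc.2 hxy)) (mem_image_of_mem f (right_mem_Icc.2 hxy))

lemma image_Icc_prod_Icc_of_fderiv_nonneg {f : ℝ × ℝ → ℝ} {K : Set (ℝ × ℝ)}
    (hf : ∀ p ∈ K, DifferentiableAt ℝ f p) (hfx : ∀ p ∈ K, 0 ≤ fderiv ℝ f p (1, 0))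
    (hfy : ∀ p ∈ K, 0 ≤ fderiv ℝ f p (0, 1)) {p₁ p₂ q₁ q₂ : ℝ} (hp : p₁ ≤ p₂) (hq : q₁ ≤ q₂)
    (hK : Icc p₁ p₂ ×ˢ Icc q₁ q₂ ⊆ K) :
    f '' (Icc p₁ p₂ ×ˢ Icc q₁ q₂) = Icc (f (p₁, q₁)) (f (p₂, q₂)) := by
  rw [Icc_prod_Icc] at hK ⊢
  have hconv : Convex ℝ (Icc (p₁, q₁) (p₂, q₂)) := convex_Icc _ _
  exact (hconv.monotoneOn_of_fderiv_nonneg (fun p hp => hf p (hK hp))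
    (fun p hp => hfx p (hK hp)) (fun p hp => hfy p (hK hp))).image_Icc_eq
    (fun p hp => (hf p (hK hp)).continuousAt.continuousWithinAt) hconv.isPreconnected ⟨hp, hq⟩

lemma Icc_subset_biUnion_Icc_of_le {α : Type*} [LinearOrder α] (x y : ℕ → α) (N : ℕ)
    (h : ∀ k < N, x (k + 1) ≤ y k) : Icc (x 0) (y N) ⊆ ⋃ k ≤ N, Icc (x k) (y k) := by
  induction N with
  | zero => exact subset_iUnion₂ (s := fun k (_ : k ≤ 0) => Icc (x k) (y k)) 0 le_rfl
  | succ N ih =>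
    intro v hv
    rcases le_or_gt v (y N) with hvN | hvN
    · obtain ⟨k, hk, hvk⟩ := mem_iUnion₂.1 (ih (fun k hk => h k (by omega)) ⟨hv.1, hvN⟩)
      exact mem_iUnion₂.2 ⟨k, by omega, hvk⟩
    · exact mem_iUnion₂.2 ⟨N + 1, le_rfl, (h N N.lt_succ_self).trans hvN.le, hv.2⟩

lemma Icc_subset_biUnion₂_Icc_of_le {α : Type*} [LinearOrder α] (x y : ℕ → ℕ → α) (N M : ℕ)
    (hrow : ∀ i ≤ N, ∀ j < M, x i (j + 1) ≤ y i j) (hcol : ∀ i < N, x (i + 1) 0 ≤ y i M) :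
    Icc (x 0 0) (y N M) ⊆ ⋃ i ≤ N, ⋃ j ≤ M, Icc (x i j) (y i j) :=
  (Icc_subset_biUnion_Icc_of_le (fun i => x i 0) (fun i => y i M) N hcol).trans <|
    iUnion₂_mono fun i hi => Icc_subset_biUnion_Icc_of_le (x i) (y i) M (hrow i hi)

lemma add_le_of_disjoint_interior_Icc {p q w : ℝ} (hpq : p ≤ q)
    (h : interior (Icc p (p + w)) ∩ interior (Icc q (q + w)) = ∅) : p + w ≤ q := by
  rw [interior_Icc, interior_Icc, Ioo_inter_Ioo, max_eq_right hpq, Ioo_eq_empty_iff] at h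
  by_contra! hlt
  exact h (lt_min hlt (by linarith))

/-- `s 0, …, s N` are the left ends of `N + 1` intervals of length `w`, listed from left to right
with disjoint interiors, the first starting at `a` and the last ending at `b`. -/
structure IsOrderedPacking (s : ℕ → ℝ) (N : ℕ) (w a b : ℝ) : Prop where
  zero_eq : s 0 = a
  add_eq : s N + w = b
  add_le : ∀ k < N, s k + w ≤ s (k + 1)

namespace IsOrderedPacking

variable {s : ℕ → ℝ} {N : ℕ} {w a b : ℝ}

lemma add_mul_le (hs : IsOrderedPacking s N w a b) {i : ℕ} :
    ∀ {d : ℕ}, i + d ≤ N → s i + d * w ≤ s (i + d)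
  | 0, _ => by simp
  | d + 1, hd => by
    have h₁ := hs.add_le (i + d) (by omega)
    have h₂ := hs.add_mul_le (i := i) (d := d) (by omega)
    rw [← add_assoc]
    push_cast
    linarith

lemma Icc_subset (hs : IsOrderedPacking s N w a b) (hw : 0 ≤ w) {k : ℕ} (hk : k ≤ N) :
    Icc (s k) (s k + w) ⊆ Icc a b := by
  obtain ⟨d, rfl⟩ := Nat.exists_eq_add_of_le hk
  have h₁ := hs.add_mul_le (i := 0) (d := k) (by omega)
  have h₂ := hs.add_mul_le (i := k) (d := d) le_rfl
  rw [zero_add, hs.zero_eq] at h₁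
  have h₃ := hs.add_eq
  have h₄ := mul_nonneg (Nat.cast_nonneg (α := ℝ) k) hw
  have h₅ := mul_nonneg (Nat.cast_nonneg (α := ℝ) d) hw
  exact Icc_subset_Icc (by linarith) (by linarith)

lemma sub_le (hs : IsOrderedPacking s N w a b) {k : ℕ} (hk : k < N) :
    s (k + 1) - (s k + w) ≤ b - a - (N + 1) * w := by
  obtain ⟨d, rfl⟩ := Nat.exists_eq_add_of_le hk
  have h₁ := hs.add_mul_le (i := 0) (d := k) (by omega)
  have h₂ := hs.add_mul_le (i := k + 1) (d := d) le_rfl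
  rw [zero_add, hs.zero_eq] at h₁
  have h₃ := hs.add_eq
  push_cast
  linarith

end IsOrderedPacking

open Fin.NatCast in
lemma exists_isOrderedPacking {N : ℕ} {w a b : ℝ} (hw : 0 ≤ w) (l : Fin (N + 1) → ℝ)
    (hsub : ∀ i, Icc (l i) (l i + w) ⊆ Icc a b)
    (hdisj : ∀ i i', i ≠ i' →
      interior (Icc (l i) (l i + w)) ∩ interior (Icc (l i') (l i' + w)) = ∅)
    (hhull : convexHull ℝ (⋃ i, Icc (l i) (l i + w)) = Icc a b) :
    ∃ s : ℕ → ℝ, IsOrderedPacking s N w a b ∧ ∀ k ≤ N, ∃ i, s k = l i := by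
  set σ := Tuple.sort l
  have hmono : Monotone (l ∘ σ) := Tuple.monotone_sort l
  have hself : ∀ i, l i ∈ Icc (l i) (l i + w) := fun i => ⟨le_rfl, le_add_of_nonneg_right hw⟩
  have hself' : ∀ i, l i + w ∈ Icc (l i) (l i + w) := fun i => ⟨le_add_of_nonneg_right hw, le_rfl⟩
  have hab : a ≤ b := ((hsub 0 (hself 0)).1).trans (hsub 0 (hself 0)).2
  have hhull_subset : ∀ T : Set ℝ, Convex ℝ T → (∀ i, Icc (l i) (l i + w) ⊆ T) →
      Icc a b ⊆ T := fun T hT h => hhull ▸ convexHull_min (iUnion_subset h) hT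
  refine ⟨fun k => l (σ k), ⟨?_, ?_, fun k hk => ?_⟩, fun k _ => ⟨_, rfl⟩⟩
  · have hmin : ∀ i, l (σ 0) ≤ l i := fun i => by
      simpa using hmono (Fin.zero_le (σ.symm i))
    refine le_antisymm ?_ (hsub _ (hself _)).1
    simpa using hhull_subset (Ici (l (σ 0))) (convex_Ici _)
      (fun i x hx => (hmin i).trans hx.1) (left_mem_Icc.2 hab)
  · have hmax : ∀ i, l i ≤ l (σ (Fin.last N)) := fun i => by
      simpa using hmono (Fin.le_last (σ.symm i))
    simp only [Fin.natCast_eq_last]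
    refine le_antisymm (hsub _ (hself' _)).2 ?_
    exact hhull_subset (Iic (l (σ (Fin.last N)) + w)) (convex_Iic _)
      (fun i x hx => hx.2.trans (by linarith [hmax i])) (right_mem_Icc.2 hab)
  · refine add_le_of_disjoint_interior_Icc (hmono (Fin.natCast_mono (by omega) (by omega)))
      (hdisj _ _ (σ.injective.ne ?_))
    rw [Ne, Fin.ext_iff, Fin.val_cast_of_lt (by omega), Fin.val_cast_of_lt (by omega)]
    omega

lemma IsOrderedPacking.Icc_subset_biUnion₂_image {f : ℝ × ℝ → ℝ} {a b t w θ₁ θ₂ : ℝ} {N : ℕ}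
    {s r : ℕ → ℝ} (hs : IsOrderedPacking s N w a (a + t)) (hr : IsOrderedPacking r N w b (b + t))
    (ht : 0 ≤ t) (hw : 0 ≤ w) (hθ₁ : t - (N + 1) * w ≤ θ₁ * t) (hθ₂ : t - (N + 1) * w ≤ θ₂ * w)
    (hf : ∀ p ∈ Icc a (a + t) ×ˢ Icc b (b + t), DifferentiableAt ℝ f p)
    (hfx : ∀ p ∈ Icc a (a + t) ×ˢ Icc b (b + t), 0 ≤ fderiv ℝ f p (1, 0))
    (hfy : ∀ p ∈ Icc a (a + t) ×ˢ Icc b (b + t), 0 ≤ fderiv ℝ f p (0, 1))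
    (hlow : ∀ p ∈ Icc a (a + t) ×ˢ Icc b (b + t),
      θ₁ * fderiv ℝ f p (1, 0) ≤ fderiv ℝ f p (0, 1))
    (hupp : ∀ p ∈ Icc a (a + t) ×ˢ Icc b (b + t),
      θ₂ * fderiv ℝ f p (0, 1) ≤ fderiv ℝ f p (1, 0)) :
    Icc (f (a, b)) (f (a + t, b + t)) ⊆
      ⋃ i ≤ N, ⋃ j ≤ N, f '' (Icc (s i) (s i + w) ×ˢ Icc (r j) (r j + w)) := by
  have hK : Convex ℝ (Icc a (a + t) ×ˢ Icc b (b + t)) := (convex_Icc _ _).prod (convex_Icc _ _)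
  have hsK : ∀ i ≤ N, s i ∈ Icc a (a + t) ∧ s i + w ∈ Icc a (a + t) := fun i hi =>
    ⟨hs.Icc_subset hw hi ⟨le_rfl, by linarith⟩, hs.Icc_subset hw hi ⟨by linarith, le_rfl⟩⟩
  have hrK : ∀ j ≤ N, r j ∈ Icc b (b + t) ∧ r j + w ∈ Icc b (b + t) := fun j hj =>
    ⟨hr.Icc_subset hw hj ⟨le_rfl, by linarith⟩, hr.Icc_subset hw hj ⟨by linarith, le_rfl⟩⟩
  have hrow : ∀ i ≤ N, ∀ j < N, f (s i, r (j + 1)) ≤ f (s i + w, r j + w) := by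
    intro i hi j hj
    refine hK.le_of_mul_fderiv_le hf hfy hupp ⟨(hsK i hi).1, (hrK (j + 1) hj).1⟩
      ⟨(hsK i hi).2, (hrK j hj.le).2⟩ (g := r (j + 1) - (r j + w)) (h := w) ?_ hw
      (by linarith [hr.sub_le hj])
    ext <;> simp
  have hcol : ∀ i < N, f (s (i + 1), r 0) ≤ f (s i + w, r N + w) := by
    intro i hi
    refine hK.le_of_mul_fderiv_le hf hfx hlow ⟨(hsK (i + 1) hi).1, (hrK 0 N.zero_le).1⟩
      ⟨(hsK i hi.le).2, (hrK N le_rfl).2⟩ (g := s (i + 1) - (s i + w)) (h := t) ?_ ht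
      (by linarith [hs.sub_le hi])
    ext <;> simp [hr.zero_eq, hr.add_eq]
  calc Icc (f (a, b)) (f (a + t, b + t)) = Icc (f (s 0, r 0)) (f (s N + w, r N + w)) := by
        rw [hs.zero_eq, hr.zero_eq, hs.add_eq, hr.add_eq]
    _ ⊆ ⋃ i ≤ N, ⋃ j ≤ N, Icc (f (s i, r j)) (f (s i + w, r j + w)) :=
        Icc_subset_biUnion₂_Icc_of_le (fun i j => f (s i, r j))
          (fun i j => f (s i + w, r j + w)) N N hrow hcol
    _ = ⋃ i ≤ N, ⋃ j ≤ N, f '' (Icc (s i) (s i + w) ×ˢ Icc (r j) (r j + w)) :=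
        iUnion₂_congr fun i hi => iUnion₂_congr fun j hj =>
          (image_Icc_prod_Icc_of_fderiv_nonneg hf hfx hfy (by linarith) (by linarith)
            (prod_mono (hs.Icc_subset hw hi) (hr.Icc_subset hw hj))).symm

/-- combined claim in the proof of Lemma 2.2 for one subdivision step.
Let `f` be continuously differentiable on the open set `U ⊆ ℝ²` with `∂ₓ f > 0` and
`∂_y f > 0` on a closed square `I × J ⊆ U`, `I = [a, a+t]`, `J = [b, b+t]`, `t > 0`.
Fix `n ≥ 2` and `0 < cn < 1`, and suppose `1 - cn < ∂_y f / ∂ₓ f < c / (1 - nc)` on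
`I × J`.  If `I_1, …, I_n ⊆ I` and `J_1, …, J_n ⊆ J` are closed intervals of length
`c·t` with pairwise disjoint interiors whose unions `Ĩ`, `J̃` have convex hulls `I`,
`J` respectively, then `⋃_i ⋃_j f(I_i × J_j) = f(Ĩ × J̃)` is the interval
`f(I × J) = [f(a, b), f(a+t, b+t)]`. -/
theorem union_image_subsquares_eq_image_square
    (U : Set (ℝ × ℝ)) (hU : IsOpen U)
    (f : ℝ × ℝ → ℝ) (hf : ContDiffOn ℝ 1 f U)
    (a b t : ℝ) (ht : 0 < t)
    (hIJU : Icc a (a + t) ×ˢ Icc b (b + t) ⊆ U)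
    (hdx : ∀ p ∈ Icc a (a + t) ×ˢ Icc b (b + t), 0 < fderiv ℝ f p (1, 0))
    (hdy : ∀ p ∈ Icc a (a + t) ×ˢ Icc b (b + t), 0 < fderiv ℝ f p (0, 1))
    (n : ℕ) (hn : 2 ≤ n) (c : ℝ) (hc : 0 < c) (hcn : c * (n : ℝ) < 1)
    (hratio : ∀ p ∈ Icc a (a + t) ×ˢ Icc b (b + t),
      1 - c * (n : ℝ) < fderiv ℝ f p (0, 1) / fderiv ℝ f p (1, 0) ∧
        fderiv ℝ f p (0, 1) / fderiv ℝ f p (1, 0) < c / (1 - (n : ℝ) * c))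
    (l : Fin n → ℝ) (m : Fin n → ℝ)
    (hIsub : ∀ i, Icc (l i) (l i + c * t) ⊆ Icc a (a + t))
    (hJsub : ∀ j, Icc (m j) (m j + c * t) ⊆ Icc b (b + t))
    (hIdisj : ∀ i i', i ≠ i' →
      interior (Icc (l i) (l i + c * t)) ∩ interior (Icc (l i') (l i' + c * t)) = ∅)
    (hJdisj : ∀ j j', j ≠ j' →
      interior (Icc (m j) (m j + c * t)) ∩ interior (Icc (m j') (m j' + c * t)) = ∅)
    (hIhull : convexHull ℝ (⋃ i, Icc (l i) (l i + c * t)) = Icc a (a + t))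
    (hJhull : convexHull ℝ (⋃ j, Icc (m j) (m j + c * t)) = Icc b (b + t)) :
    (⋃ i, ⋃ j, f '' (Icc (l i) (l i + c * t) ×ˢ Icc (m j) (m j + c * t))) =
        f '' ((⋃ i, Icc (l i) (l i + c * t)) ×ˢ (⋃ j, Icc (m j) (m j + c * t))) ∧
      (⋃ i, ⋃ j, f '' (Icc (l i) (l i + c * t) ×ˢ Icc (m j) (m j + c * t))) =
        f '' (Icc a (a + t) ×ˢ Icc b (b + t)) ∧
      f '' (Icc a (a + t) ×ˢ Icc b (b + t)) = Icc (f (a, b)) (f (a + t, b + t)) := by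
  obtain ⟨N, rfl⟩ : ∃ N, n = N + 1 := ⟨n - 1, by omega⟩
  have hw : 0 ≤ c * t := (mul_pos hc ht).le
  have hdiff : ∀ p ∈ Icc a (a + t) ×ˢ Icc b (b + t), DifferentiableAt ℝ f p := fun p hp =>
    (hf.differentiableOn one_ne_zero p (hIJU hp)).differentiableAt (hU.mem_nhds (hIJU hp))
  have hfx := fun p hp => (hdx p hp).le
  have hfy := fun p hp => (hdy p hp).le
  have hsquare : f '' (Icc a (a + t) ×ˢ Icc b (b + t)) = Icc (f (a, b)) (f (a + t, b + t)) :=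
    image_Icc_prod_Icc_of_fderiv_nonneg hdiff hfx hfy (by linarith) (by linarith) subset_rfl
  refine ⟨by simp only [iUnion_prod_const, prod_iUnion, image_iUnion]; exact iUnion_comm _,
    (iUnion₂_subset fun i j => image_mono (prod_mono (hIsub i) (hJsub j))).antisymm ?_, hsquare⟩
  have hlow : ∀ p ∈ Icc a (a + t) ×ˢ Icc b (b + t),
      (1 - c * ((N + 1 : ℕ) : ℝ)) * fderiv ℝ f p (1, 0) ≤ fderiv ℝ f p (0, 1) := fun p hp =>
    ((lt_div_iff₀ (hdx p hp)).1 (hratio p hp).1).le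
  have hupp : ∀ p ∈ Icc a (a + t) ×ˢ Icc b (b + t),
      (1 - ((N + 1 : ℕ) : ℝ) * c) / c * fderiv ℝ f p (0, 1) ≤ fderiv ℝ f p (1, 0) := by
    intro p hp
    have h := (div_lt_div_iff₀ (hdx p hp) (by linarith)).1 (hratio p hp).2
    rw [div_mul_eq_mul_div, div_le_iff₀ hc]
    linarith
  obtain ⟨s, hs, hsl⟩ := exists_isOrderedPacking hw l hIsub hIdisj hIhull
  obtain ⟨r, hr, hrm⟩ := exists_isOrderedPacking hw m hJsub hJdisj hJhull
  rw [hsquare]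
  refine (hs.Icc_subset_biUnion₂_image hr ht.le hw (by push_cast; linarith)
    (by field_simp; push_cast; linarith) hdiff hfx hfy hlow hupp).trans
    (iUnion₂_subset fun k hk => iUnion₂_subset fun k' hk' => ?_)
  obtain ⟨i, hi⟩ := hsl k hk
  obtain ⟨j, hj⟩ := hrm k' hk'
  rw [hi, hj]
  exact subset_iUnion₂_of_subset i j subset_rfl
end
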